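/- For positive-definite density matrices ρ_k, ρ_{k+1} and interpolated states ρ'_ℓ = (1 − ℓ/n)ρ_k + (ℓ/n)ρ_{k+1}, the discrete heat functional Λ_n = Σ_{ℓ=0}^{n−1} tr[(ρ'_ℓ − ρ'_{ℓ+1}) ln ρ'_{ℓ+1}] converges to the entropy change S(ρ_{k+1}) − S(ρ_k) as n → ∞ (asymptotic saturation of the Clausius inequality). -/

import Mathlib

open Matrix BigOperators ComplexOrder

/-- Apply a real function to a Hermitian matrix via the spectral theorem
(junk value `0` for non-Hermitian input). -/
noncomputable def matFun {n : Type*} [Fintype n] [DecidableEq n]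
    (f : ℝ → ℝ) (A : Matrix n n ℂ) : Matrix n n ℂ :=
  if hA : A.IsHermitian then
    (hA.eigenvectorUnitary : Matrix n n ℂ) *
      Matrix.diagonal (fun i => (f (hA.eigenvalues i) : ℂ)) *
      star (hA.eigenvectorUnitary : Matrix n n ℂ)
  else 0

/-- Matrix logarithm of a Hermitian matrix. -/
noncomputable def matLog {n : Type*} [Fintype n] [DecidableEq n]
    (A : Matrix n n ℂ) : Matrix n n ℂ := matFun Real.log A

/-- Matrix exponential of a Hermitian matrix. -/
noncomputable def matExp {n : Type*} [Fintype n] [DecidableEq n]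
    (A : Matrix n n ℂ) : Matrix n n ℂ := matFun Real.exp A

/-- The Gibbs state `e^{-βH}/tr[e^{-βH}]`. -/
noncomputable def gibbs {n : Type*} [Fintype n] [DecidableEq n]
    (β : ℝ) (H : Matrix n n ℂ) : Matrix n n ℂ :=
  (matExp ((-β) • H)).trace⁻¹ • matExp ((-β) • H)

/-- A density matrix: positive semidefinite with unit trace. -/
def IsDensity {n : Type*} [Fintype n] [DecidableEq n] (ρ : Matrix n n ℂ) : Prop :=
  ρ.PosSemidef ∧ ρ.trace = 1

/-- von Neumann entropy `S(ρ) = -tr[ρ ln ρ]`. -/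
noncomputable def vnEntropy {n : Type*} [Fintype n] [DecidableEq n]
    (ρ : Matrix n n ℂ) : ℝ := -((ρ * matLog ρ).trace.re)

/-- Relative entropy `S(ρ‖σ) = tr[ρ ln ρ] - tr[ρ ln σ]`. -/
noncomputable def relEnt {n : Type*} [Fintype n] [DecidableEq n]
    (ρ σ : Matrix n n ℂ) : ℝ :=
  ((ρ * matLog ρ).trace - (ρ * matLog σ).trace).re

/-!
Write `ρ'_ℓ` for the interpolated states and `ΔS = S(ρ_{k+1}) - S(ρ_k)`. Each summand of `Λ_m` is
`S(ρ'_{ℓ+1}) - S(ρ'_ℓ) - S(ρ'_ℓ‖ρ'_{ℓ+1})`, so `Λ_m = ΔS - ∑_ℓ S(ρ'_ℓ‖ρ'_{ℓ+1})`, and Klein's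
inequality gives `Λ_m ≤ ΔS`. Consecutive states differ by `(ρ_k - ρ_{k+1}) / m`, so the symmetrised
relative entropies `S(A‖B) + S(B‖A) = tr[(A - B)(log A - log B)]` of consecutive states telescope to
`C / m` with `C = S(ρ_k‖ρ_{k+1}) + S(ρ_{k+1}‖ρ_k)`; dropping the reversed terms gives
`Λ_m ≥ ΔS - C / m`.
-/

open Complex Finset

lemma Real.sub_le_mul_log_sub_log {p q : ℝ} (hp : 0 ≤ p) (hq : 0 < q) :
    p - q ≤ p * (Real.log p - Real.log q) := by
  rcases hp.eq_or_lt with rfl | hp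
  · simpa using hq.le
  have h := Real.log_le_sub_one_of_pos (div_pos hq hp)
  rw [Real.log_div hq.ne' hp.ne'] at h
  have hcancel : p * (q / p) = q := mul_div_cancel₀ q hp.ne'
  nlinarith [mul_le_mul_of_nonneg_left h hp.le]

namespace Matrix

variable {n : Type*} [Fintype n] [DecidableEq n]

lemma trace_conj_diagonal_mul_conj_diagonal (U V : Matrix n n ℂ) (a b : n → ℝ) :
    (U * diagonal (fun i => (a i : ℂ)) * star U *
        (V * diagonal (fun j => (b j : ℂ)) * star V)).trace
      = ((∑ i, ∑ j, normSq ((star U * V) i j) * a i * b j : ℝ) : ℂ) := by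
  set M := star U * V
  have hcycle : (U * diagonal (fun i => (a i : ℂ)) * star U *
        (V * diagonal (fun j => (b j : ℂ)) * star V)).trace
      = (diagonal (fun i => (a i : ℂ)) * M * diagonal (fun j => (b j : ℂ)) * star M).trace := by
    simp only [M, StarMul.star_mul, star_star, Matrix.mul_assoc]
    rw [trace_mul_comm]
    simp only [Matrix.mul_assoc]
  rw [hcycle]
  simp only [trace, diag_apply, Matrix.mul_apply, diagonal_apply, ite_mul, zero_mul, sum_ite_eq,
    mem_univ, ↓reduceIte, mul_ite, mul_zero, sum_ite_eq', star_apply, RCLike.star_def, ofReal_sum,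
    ofReal_mul]
  refine sum_congr rfl fun i _ => sum_congr rfl fun j _ => ?_
  rw [← mul_conj]
  ring

lemma sum_normSq_apply_right {M : Matrix n n ℂ} (hM : M ∈ unitaryGroup n ℂ) (i : n) :
    ∑ j, normSq (M i j) = 1 := by
  have h := congrFun (congrFun (mem_unitaryGroup_iff.mp hM) i) i
  simp only [Matrix.mul_apply, star_apply, one_apply_eq, ← starRingEnd_apply, mul_conj] at h
  exact_mod_cast h

lemma sum_normSq_apply_left {M : Matrix n n ℂ} (hM : M ∈ unitaryGroup n ℂ) (j : n) :
    ∑ i, normSq (M i j) = 1 := by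
  have h := congrFun (congrFun (mem_unitaryGroup_iff'.mp hM) j) j
  simp only [Matrix.mul_apply, star_apply, one_apply_eq, ← starRingEnd_apply, conj_mul'] at h
  simp only [normSq_eq_norm_sq]
  exact_mod_cast h

lemma IsHermitian.eq_conj_diagonal_eigenvalues {A : Matrix n n ℂ} (hA : A.IsHermitian) :
    A = (hA.eigenvectorUnitary : Matrix n n ℂ) * diagonal (fun i => (hA.eigenvalues i : ℂ)) *
      star (hA.eigenvectorUnitary : Matrix n n ℂ) :=
  hA.spectral_theorem

end Matrix

section RelativeEntropy

variable {n : Type*} [Fintype n] [DecidableEq n]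

lemma matLog_of_isHermitian {A : Matrix n n ℂ} (hA : A.IsHermitian) :
    matLog A = (hA.eigenvectorUnitary : Matrix n n ℂ) *
      diagonal (fun i => (Real.log (hA.eigenvalues i) : ℂ)) *
      star (hA.eigenvectorUnitary : Matrix n n ℂ) :=
  dif_pos hA

lemma re_trace_mul_matLog {ρ σ : Matrix n n ℂ} (hρ : ρ.IsHermitian) (hσ : σ.IsHermitian) :
    (ρ * matLog σ).trace.re = ∑ i, ∑ j,
      normSq ((star (hρ.eigenvectorUnitary : Matrix n n ℂ) * hσ.eigenvectorUnitary) i j) *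
        hρ.eigenvalues i * Real.log (hσ.eigenvalues j) := by
  conv_lhs => rw [hρ.eq_conj_diagonal_eigenvalues, matLog_of_isHermitian hσ]
  rw [trace_conj_diagonal_mul_conj_diagonal, ofReal_re]

lemma re_trace_mul_matLog_self {ρ : Matrix n n ℂ} (hρ : ρ.IsHermitian) :
    (ρ * matLog ρ).trace.re = ∑ i, hρ.eigenvalues i * Real.log (hρ.eigenvalues i) := by
  rw [re_trace_mul_matLog hρ hρ, Unitary.coe_star_mul_self]
  simp [one_apply, apply_ite]

lemma re_trace_eq_sum_eigenvalues {ρ : Matrix n n ℂ} (hρ : ρ.IsHermitian) :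
    ρ.trace.re = ∑ i, hρ.eigenvalues i := by
  simp [hρ.trace_eq_sum_eigenvalues]

/-- Klein's inequality. For eigenbases `(uᵢ)`, `(vⱼ)` of `ρ`, `σ` with eigenvalues `pᵢ`, `qⱼ`, the
weights `cᵢⱼ = |⟨uᵢ, vⱼ⟩|²` form a doubly stochastic matrix, and
`S(ρ‖σ) = ∑ cᵢⱼ pᵢ (log pᵢ - log qⱼ) ≥ ∑ cᵢⱼ (pᵢ - qⱼ) = tr ρ - tr σ`. -/
theorem re_trace_sub_le_relEnt {ρ σ : Matrix n n ℂ} (hρ : ρ.PosSemidef) (hσ : σ.PosDef) :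
    (ρ.trace - σ.trace).re ≤ relEnt ρ σ := by
  set p := hρ.1.eigenvalues
  set q := hσ.1.eigenvalues
  set c := fun i j => normSq ((star (hρ.1.eigenvectorUnitary : Matrix n n ℂ) *
    hσ.1.eigenvectorUnitary) i j)
  have hunitary : star (hρ.1.eigenvectorUnitary : Matrix n n ℂ) * hσ.1.eigenvectorUnitary ∈
      unitaryGroup n ℂ :=
    mul_mem (Unitary.star_mem hρ.1.eigenvectorUnitary.2) hσ.1.eigenvectorUnitary.2
  have hrow : ∀ i, ∑ j, c i j = 1 := sum_normSq_apply_right hunitary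
  have hcol : ∀ j, ∑ i, c i j = 1 := sum_normSq_apply_left hunitary
  calc (ρ.trace - σ.trace).re = ∑ i, p i - ∑ j, q j := by
        rw [sub_re, re_trace_eq_sum_eigenvalues hρ.1, re_trace_eq_sum_eigenvalues hσ.1]
    _ = ∑ i, ∑ j, c i j * (p i - q j) := by
        simp only [mul_sub, sum_sub_distrib]
        rw [sum_comm (f := fun i j => c i j * q j)]
        simp only [← sum_mul, hrow, hcol, one_mul]
    _ ≤ ∑ i, ∑ j, c i j * (p i * (Real.log (p i) - Real.log (q j))) := by
        gcongr with i _ j _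
        · exact normSq_nonneg _
        · exact Real.sub_le_mul_log_sub_log (hρ.eigenvalues_nonneg i) (hσ.eigenvalues_pos j)
    _ = relEnt ρ σ := by
        rw [relEnt, sub_re, re_trace_mul_matLog_self hρ.1, re_trace_mul_matLog hρ.1 hσ.1]
        simp only [mul_sub, sum_sub_distrib, ← sum_mul, hrow, one_mul, mul_assoc]
        rfl

lemma sum_range_re_trace_sub_mul_matLog (P : ℕ → Matrix n n ℂ) (m : ℕ) :
    ∑ ℓ ∈ range m, ((P ℓ - P (ℓ + 1)) * matLog (P (ℓ + 1))).trace.re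
      = vnEntropy (P m) - vnEntropy (P 0) - ∑ ℓ ∈ range m, relEnt (P ℓ) (P (ℓ + 1)) := by
  have hterm : ∀ ℓ, ((P ℓ - P (ℓ + 1)) * matLog (P (ℓ + 1))).trace.re
      = vnEntropy (P (ℓ + 1)) - vnEntropy (P ℓ) - relEnt (P ℓ) (P (ℓ + 1)) := by
    intro ℓ
    simp only [vnEntropy, relEnt, sub_mul, trace_sub, sub_re]
    ring
  rw [sum_congr rfl fun ℓ _ => hterm ℓ, sum_sub_distrib,
    sum_range_sub (fun ℓ => vnEntropy (P ℓ))]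

lemma relEnt_add_relEnt (A B : Matrix n n ℂ) :
    relEnt A B + relEnt B A = ((A - B) * (matLog A - matLog B)).trace.re := by
  simp only [relEnt, sub_mul, mul_sub, trace_sub, sub_re]
  ring

end RelativeEntropy

section Interpolation

variable {n : Type*}

noncomputable def interpolatedState (ρ σ : Matrix n n ℂ) (m ℓ : ℕ) : Matrix n n ℂ :=
  (1 - (ℓ : ℝ) / m) • ρ + ((ℓ : ℝ) / m) • σ

variable {ρ σ : Matrix n n ℂ} {m ℓ : ℕ}

@[simp]
lemma interpolatedState_zero : interpolatedState ρ σ m 0 = ρ := by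
  simp [interpolatedState]

lemma interpolatedState_self (hm : m ≠ 0) : interpolatedState ρ σ m m = σ := by
  have hmm : (m : ℝ) / m = 1 := div_self (Nat.cast_ne_zero.mpr hm)
  simp [interpolatedState, hmm]

lemma interpolatedState_sub_succ :
    interpolatedState ρ σ m ℓ - interpolatedState ρ σ m (ℓ + 1) = (m : ℝ)⁻¹ • (ρ - σ) := by
  simp only [interpolatedState, Nat.cast_succ]
  module

lemma posDef_interpolatedState (hρ : ρ.PosDef) (hσ : σ.PosDef) (hℓ : ℓ ≤ m) :
    (interpolatedState ρ σ m ℓ).PosDef := by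
  have ht : (ℓ : ℝ) / m ≤ 1 := div_le_one_of_le₀ (by exact_mod_cast hℓ) m.cast_nonneg
  rcases ht.lt_or_eq with ht | ht
  · exact (hρ.smul (sub_pos.mpr ht)).add_posSemidef (hσ.posSemidef.smul (by positivity))
  · simpa [interpolatedState, ht] using hσ

variable [Fintype n]

lemma trace_interpolatedState (htr : ρ.trace = σ.trace) :
    (interpolatedState ρ σ m ℓ).trace = ρ.trace := by
  rw [interpolatedState, trace_add, trace_smul, trace_smul, ← htr, ← add_smul, sub_add_cancel,
    one_smul]

variable [DecidableEq n]

lemma relEnt_interpolatedState_nonneg (hρ : ρ.PosDef) (hσ : σ.PosDef) (htr : ρ.trace = σ.trace)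
    {ℓ' : ℕ} (hℓ : ℓ ≤ m) (hℓ' : ℓ' ≤ m) :
    0 ≤ relEnt (interpolatedState ρ σ m ℓ) (interpolatedState ρ σ m ℓ') := by
  simpa [trace_interpolatedState htr] using re_trace_sub_le_relEnt
    (posDef_interpolatedState hρ hσ hℓ).posSemidef (posDef_interpolatedState hρ hσ hℓ')

lemma sum_range_relEnt_interpolatedState_add (hm : m ≠ 0) :
    ∑ ℓ ∈ range m, (relEnt (interpolatedState ρ σ m ℓ) (interpolatedState ρ σ m (ℓ + 1)) +
      relEnt (interpolatedState ρ σ m (ℓ + 1)) (interpolatedState ρ σ m ℓ))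
      = (relEnt ρ σ + relEnt σ ρ) / m := by
  set h : ℕ → ℝ := fun ℓ => ((ρ - σ) * matLog (interpolatedState ρ σ m ℓ)).trace.re
  have hterm : ∀ ℓ, relEnt (interpolatedState ρ σ m ℓ) (interpolatedState ρ σ m (ℓ + 1)) +
      relEnt (interpolatedState ρ σ m (ℓ + 1)) (interpolatedState ρ σ m ℓ)
      = (h ℓ - h (ℓ + 1)) / m := by
    intro ℓ
    rw [relEnt_add_relEnt, interpolatedState_sub_succ, smul_mul_assoc, trace_smul]
    simp only [h, smul_re, smul_eq_mul, mul_sub, trace_sub, sub_re, div_eq_inv_mul]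
  rw [sum_congr rfl fun ℓ _ => hterm ℓ, ← sum_div, sum_range_sub', relEnt_add_relEnt]
  simp [h, interpolatedState_self hm, mul_sub, trace_sub]

/-- The heat functional `Λ_m` of the paper, along the states `ρ'_ℓ = interpolatedState ρ σ m ℓ`. -/
noncomputable def discreteHeat (ρ σ : Matrix n n ℂ) (m : ℕ) : ℝ :=
  ∑ ℓ ∈ range m, ((interpolatedState ρ σ m ℓ - interpolatedState ρ σ m (ℓ + 1)) *
    matLog (interpolatedState ρ σ m (ℓ + 1))).trace.re

lemma discreteHeat_eq (hm : m ≠ 0) :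
    discreteHeat ρ σ m = vnEntropy σ - vnEntropy ρ -
      ∑ ℓ ∈ range m, relEnt (interpolatedState ρ σ m ℓ) (interpolatedState ρ σ m (ℓ + 1)) := by
  rw [discreteHeat, sum_range_re_trace_sub_mul_matLog, interpolatedState_self hm,
    interpolatedState_zero]

variable (hρ : ρ.PosDef) (hσ : σ.PosDef) (htr : ρ.trace = σ.trace) (hm : m ≠ 0)
include hρ hσ htr hm

lemma discreteHeat_le : discreteHeat ρ σ m ≤ vnEntropy σ - vnEntropy ρ := by
  rw [discreteHeat_eq hm, sub_le_self_iff]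
  exact sum_nonneg fun ℓ hℓ => relEnt_interpolatedState_nonneg hρ hσ htr
    (mem_range.mp hℓ).le (mem_range.mp hℓ)

lemma sub_div_le_discreteHeat :
    vnEntropy σ - vnEntropy ρ - (relEnt ρ σ + relEnt σ ρ) / m ≤ discreteHeat ρ σ m := by
  rw [discreteHeat_eq hm, ← sum_range_relEnt_interpolatedState_add hm]
  gcongr with ℓ hℓ
  exact le_add_of_nonneg_right (relEnt_interpolatedState_nonneg hρ hσ htr
    (mem_range.mp hℓ) (mem_range.mp hℓ).le)

end Interpolation

/-- asymptotic saturation of the Clausius inequality. -/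
theorem interpolated_Lambda_tendsto {n : Type*} [Fintype n] [DecidableEq n]
    (ρk ρk1 : Matrix n n ℂ) (hk : IsDensity ρk) (hk1 : IsDensity ρk1)
    (hkpd : ρk.PosDef) (hk1pd : ρk1.PosDef) :
    Filter.Tendsto
      (fun m : ℕ => ∑ ℓ ∈ Finset.range m,
        ((((1 - (ℓ : ℝ) / m) • ρk + ((ℓ : ℝ) / m) • ρk1) -
          ((1 - ((ℓ + 1 : ℕ) : ℝ) / m) • ρk + (((ℓ + 1 : ℕ) : ℝ) / m) • ρk1)) *
          matLog ((1 - ((ℓ + 1 : ℕ) : ℝ) / m) • ρk + (((ℓ + 1 : ℕ) : ℝ) / m) • ρk1)).trace.re)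
      Filter.atTop (nhds (vnEntropy ρk1 - vnEntropy ρk)) := by
  change Filter.Tendsto (discreteHeat ρk ρk1) Filter.atTop _
  have htr : ρk.trace = ρk1.trace := hk.2.trans hk1.2.symm
  have hlower : Filter.Tendsto (fun m : ℕ => vnEntropy ρk1 - vnEntropy ρk -
      (relEnt ρk ρk1 + relEnt ρk1 ρk) / m) Filter.atTop (nhds (vnEntropy ρk1 - vnEntropy ρk)) := by
    simpa using tendsto_const_nhds.sub
      (tendsto_const_div_atTop_nhds_zero_nat (relEnt ρk ρk1 + relEnt ρk1 ρk))
  refine tendsto_of_tendsto_of_tendsto_of_le_of_le' hlower tendsto_const_nhds ?_ ?_ <;>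
    filter_upwards [Filter.eventually_ne_atTop 0] with m hm
  · exact sub_div_le_discreteHeat hkpd hk1pd htr hm
  · exact discreteHeat_le hkpd hk1pd htr hm
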